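/- arXiv:2503.09309 — 3 statements merged into one kernel-verified Lean document; each statement's English description precedes it below -/
import Mathlib

section
/- Let M and M̃ be two finite-horizon MDPs identical except for their transition kernels P and P̃, and let π be any Markov policy. Then ‖μ^π_{M̃} − μ^π_M‖₁ ≤ H · Σ_{h=1}^{H−1} Σ_{s,a} μ^π_{M,h}(s,a) ‖P̃_h(·|s,a) − P_h(·|s,a)‖₁. -/
open Finset

def IsPolicy {S A : Type*} [Fintype A] (π : ℕ → S → A → ℝ) : Prop :=
  ∀ h s, (∀ a, 0 ≤ π h s a) ∧ ∑ a, π h s a = 1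

def IsKernel {S A : Type*} [Fintype S] (P : ℕ → S → A → S → ℝ) : Prop :=
  ∀ h s a, (∀ s', 0 ≤ P h s a s') ∧ ∑ s', P h s a s' = 1

def IsProb {S : Type*} [Fintype S] (μ₁ : S → ℝ) : Prop :=
  (∀ s, 0 ≤ μ₁ s) ∧ ∑ s, μ₁ s = 1

noncomputable def occ {S A : Type*} [Fintype S] [Fintype A] (μ₁ : S → ℝ)
    (P : ℕ → S → A → S → ℝ) (π : ℕ → S → A → ℝ) : ℕ → S → A → ℝ
  | 0 => fun s a => μ₁ s * π 0 s a
  | (h+1) => fun s a => π (h+1) s a * ∑ s', ∑ a', P h s' a' s * occ μ₁ P π h s' a'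

/-!
Both occupancy sequences are generated by the same linear step `ν ↦ π (ν K)`. Splitting
`μ̃_{h+1} - μ_{h+1} = step_{P̃} (μ̃_h - μ_h) + step_{P̃ - P} μ_h` and using that a step with a
stochastic kernel and policy is an `ℓ¹`-contraction gives
`‖μ̃_{h+1} - μ_{h+1}‖₁ ≤ ‖μ̃_h - μ_h‖₁ + Σ_{s,a} μ_h(s,a) ‖P̃_h(·|s,a) - P_h(·|s,a)‖₁`.
Since `μ̃_0 = μ_0`, each of the `H` errors is at most the sum of the first `H - 1` increments.
-/

section OccupancyStep

variable {S A : Type*} [Fintype S] [Fintype A]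

def occStep (K : S → A → S → ℝ) (π : S → A → ℝ) (ν : S → A → ℝ) : S → A → ℝ :=
  fun s a => π s a * ∑ s', ∑ a', K s' a' s * ν s' a'

theorem occ_succ (μ₁ : S → ℝ) (P : ℕ → S → A → S → ℝ) (π : ℕ → S → A → ℝ) (h : ℕ) :
    occ μ₁ P π (h + 1) = occStep (P h) (π (h + 1)) (occ μ₁ P π h) :=
  rfl

theorem occStep_sub (K L : S → A → S → ℝ) (π ν ν' : S → A → ℝ) :
    occStep K π ν' - occStep L π ν = occStep K π (ν' - ν) + occStep (K - L) π ν := by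
  ext s a
  simp only [occStep, Pi.sub_apply, Pi.add_apply, mul_sub, sub_mul, sum_sub_distrib]
  ring

theorem sum_abs_occStep_le {π : S → A → ℝ} (hπ₀ : ∀ s a, 0 ≤ π s a)
    (hπ₁ : ∀ s, ∑ a, π s a = 1) (K : S → A → S → ℝ) (ν : S → A → ℝ) :
    ∑ s, ∑ a, |occStep K π ν s a| ≤ ∑ s, ∑ a, |ν s a| * ∑ s', |K s a s'| := by
  have hpoint : ∀ s a, |occStep K π ν s a| ≤ π s a * ∑ s', ∑ a', |K s' a' s| * |ν s' a'| := by
    intro s a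
    rw [occStep, abs_mul, abs_of_nonneg (hπ₀ s a)]
    refine mul_le_mul_of_nonneg_left ?_ (hπ₀ s a)
    calc |∑ s', ∑ a', K s' a' s * ν s' a'| ≤ ∑ s', |∑ a', K s' a' s * ν s' a'| :=
          Finset.abs_sum_le_sum_abs _ _
      _ ≤ ∑ s', ∑ a', |K s' a' s * ν s' a'| :=
          sum_le_sum fun s' _ => Finset.abs_sum_le_sum_abs _ _
      _ = _ := by simp only [abs_mul]
  calc ∑ s, ∑ a, |occStep K π ν s a|
      ≤ ∑ s, ∑ a, π s a * ∑ s', ∑ a', |K s' a' s| * |ν s' a'| :=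
        sum_le_sum fun s _ => sum_le_sum fun a _ => hpoint s a
    _ = ∑ s, ∑ s', ∑ a', |K s' a' s| * |ν s' a'| := by
        simp only [← sum_mul, hπ₁, one_mul]
    _ = ∑ s, ∑ a, |ν s a| * ∑ s', |K s a s'| := by
        rw [sum_comm]
        refine sum_congr rfl fun s _ => ?_
        rw [sum_comm]
        simp only [mul_sum, mul_comm]

theorem sum_abs_occStep_sub_le {π : S → A → ℝ} (hπ₀ : ∀ s a, 0 ≤ π s a)
    (hπ₁ : ∀ s, ∑ a, π s a = 1) {P Q : S → A → S → ℝ} (hQ₀ : ∀ s a s', 0 ≤ Q s a s')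
    (hQ₁ : ∀ s a, ∑ s', Q s a s' = 1) {ν : S → A → ℝ} (hν : ∀ s a, 0 ≤ ν s a)
    (ν' : S → A → ℝ) :
    ∑ s, ∑ a, |occStep Q π ν' s a - occStep P π ν s a| ≤
      ∑ s, ∑ a, |ν' s a - ν s a| + ∑ s, ∑ a, ν s a * ∑ s', |Q s a s' - P s a s'| := by
  have hsplit := congrFun₂ (occStep_sub Q P π ν ν')
  simp only [Pi.sub_apply, Pi.add_apply] at hsplit
  have hQ : ∀ s a, ∑ s', |Q s a s'| = 1 := fun s a => by
    simp only [abs_of_nonneg (hQ₀ s a _), hQ₁]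
  calc ∑ s, ∑ a, |occStep Q π ν' s a - occStep P π ν s a|
      ≤ ∑ s, ∑ a, |occStep Q π (ν' - ν) s a| + ∑ s, ∑ a, |occStep (Q - P) π ν s a| := by
        simp only [hsplit, ← sum_add_distrib]
        exact sum_le_sum fun s _ => sum_le_sum fun a _ => abs_add_le _ _
    _ ≤ ∑ s, ∑ a, |ν' s a - ν s a| * ∑ s', |Q s a s'|
          + ∑ s, ∑ a, |ν s a| * ∑ s', |Q s a s' - P s a s'| :=
        add_le_add (sum_abs_occStep_le hπ₀ hπ₁ _ _) (sum_abs_occStep_le hπ₀ hπ₁ _ _)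
    _ = _ := by simp only [hQ, mul_one, abs_of_nonneg (hν _ _)]

theorem occ_nonneg {μ₁ : S → ℝ} {P : ℕ → S → A → S → ℝ} {π : ℕ → S → A → ℝ}
    (hμ₁ : ∀ s, 0 ≤ μ₁ s) (hP : ∀ h s a s', 0 ≤ P h s a s') (hπ : ∀ h s a, 0 ≤ π h s a) :
    ∀ h s a, 0 ≤ occ μ₁ P π h s a
  | 0, s, a => mul_nonneg (hμ₁ s) (hπ 0 s a)
  | h + 1, s, a => mul_nonneg (hπ _ s a) <| sum_nonneg fun s' _ => sum_nonneg fun a' _ =>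
      mul_nonneg (hP h s' a' s) (occ_nonneg hμ₁ hP hπ h s' a')

end OccupancyStep

theorem le_add_sum_range_of_succ_le {α : Type*} [AddCommGroup α] [PartialOrder α]
    [IsOrderedAddMonoid α] {e d : ℕ → α} (hstep : ∀ k, e (k + 1) ≤ e k + d k) (n : ℕ) :
    e n ≤ e 0 + ∑ k ∈ range n, d k := by
  induction n with
  | zero => simp
  | succ n ih =>
    calc e (n + 1) ≤ e n + d n := hstep n
      _ ≤ e 0 + ∑ k ∈ range (n + 1), d k := by
        rw [sum_range_succ, ← add_assoc]
        exact add_le_add_left ih _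

/-- for two MDPs differing only in their transition kernels,
`‖μ^π_{M̃} − μ^π_M‖₁ ≤ H · Σ_{h=1}^{H−1} Σ_{s,a} μ^π_{M,h}(s,a) ‖P̃_h(·|s,a) − P_h(·|s,a)‖₁`. -/
theorem stmt2 {S A : Type*} [Fintype S] [Fintype A]
    (H : ℕ) (μ₁ : S → ℝ) (hμ₁ : IsProb μ₁)
    (P Pt : ℕ → S → A → S → ℝ) (hP : IsKernel P) (hPt : IsKernel Pt)
    (π : ℕ → S → A → ℝ) (hπ : IsPolicy π) :
    ∑ h ∈ Finset.range H, ∑ s, ∑ a, |occ μ₁ Pt π h s a - occ μ₁ P π h s a| ≤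
      (H : ℝ) * ∑ h ∈ Finset.range (H - 1), ∑ s, ∑ a,
        occ μ₁ P π h s a * (∑ s', |Pt h s a s' - P h s a s'|) := by
  set e : ℕ → ℝ := fun h => ∑ s, ∑ a, |occ μ₁ Pt π h s a - occ μ₁ P π h s a|
  set d : ℕ → ℝ := fun h => ∑ s, ∑ a, occ μ₁ P π h s a * (∑ s', |Pt h s a s' - P h s a s'|)
  have hocc := occ_nonneg hμ₁.1 (fun h s a => (hP h s a).1) (fun h s => (hπ h s).1)
  have hd : ∀ k, 0 ≤ d k := fun k => sum_nonneg fun s _ => sum_nonneg fun a _ =>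
    mul_nonneg (hocc k s a) (sum_nonneg fun s' _ => abs_nonneg _)
  have hstep : ∀ k, e (k + 1) ≤ e k + d k := fun k => by
    simp only [e, d, occ_succ]
    exact sum_abs_occStep_sub_le (hπ (k + 1) · |>.1) (hπ (k + 1) · |>.2) (hPt k · · |>.1)
      (hPt k · · |>.2) (hocc k) _
  have he : ∀ h < H, e h ≤ ∑ k ∈ range (H - 1), d k := fun h hh =>
    calc e h ≤ e 0 + ∑ k ∈ range h, d k := le_add_sum_range_of_succ_le hstep h
      _ = ∑ k ∈ range h, d k := by simp [e, occ]
      _ ≤ ∑ k ∈ range (H - 1), d k :=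
        sum_le_sum_of_subset_of_nonneg (range_subset_range.2 (by omega)) fun k _ _ => hd k
  calc ∑ h ∈ range H, e h ≤ ∑ _h ∈ range H, ∑ k ∈ range (H - 1), d k :=
        sum_le_sum fun h hh => he h (mem_range.1 hh)
    _ = (H : ℝ) * ∑ k ∈ range (H - 1), d k := by
        rw [sum_const, card_range, nsmul_eq_mul]
end

section
/- (Per-round steering-gap decomposition.) Let U : ℝ^{HSA} → ℝ be L_U-Lipschitz in ‖·‖₁. Let μ̄ be a feasible occupancy measure in the true model M*, with induced policy π̄, let M̂ be another model, π_* a policy, and suppose U(μ^{π*}_{M*}) ≤ U(μ^{π_*}_{M̂}) for the true maximizer π* (optimism). Then U(μ^{π*}_{M*}) − U(μ̄) ≤ L_U·H·Σ_{h,s} μ̄_h(s)·‖π_{*,h}(·|s) − π̄_h(·|s)‖₁ + L_U·(2H+1)·‖μ^{π̄}_{M̂} − μ̄‖₁, where μ̄_h(s) = Σ_a μ̄_h(s,a). -/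
/-!
Optimism and Lipschitzness bound the gap by `L_U ‖μ^{π_*}_{M̂} − μ̄‖₁`, which the triangle
inequality splits at `μ^{π̄}_{M̂}`. A policy change propagates through the dynamics without
amplification, since a transition kernel is an `ℓ¹`-contraction; so the per-step occupancy gap
in `M̂` is at most the accumulated policy gaps weighted by the state distribution of `π̄` in `M̂`.
Replacing that weight by `μ̄_h(s)` costs at most `2 ‖μ^{π̄}_{M̂} − μ̄‖₁`, because two policies are
at `ℓ¹`-distance at most `2`.
-/

open Finset

lemma IsPolicy.sum_abs_sub_le_two {S A : Type*} [Fintype A] {π π' : ℕ → S → A → ℝ} (hπ : IsPolicy π)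
    (hπ' : IsPolicy π') (h : ℕ) (s : S) : ∑ a, |π h s a - π' h s a| ≤ 2 := by
  calc ∑ a, |π h s a - π' h s a| ≤ ∑ a, (π h s a + π' h s a) := by
        gcongr with a
        refine (abs_sub _ _).trans_eq ?_
        rw [abs_of_nonneg ((hπ h s).1 a), abs_of_nonneg ((hπ' h s).1 a)]
    _ = 2 := by rw [sum_add_distrib, (hπ h s).2, (hπ' h s).2]; norm_num

section

variable {S A : Type*} [Fintype S] [Fintype A]

/-- `ℓ¹`-contraction of a transition kernel, applied to a signed measure on `S × A`. -/
lemma sum_abs_sum_kernel_mul_le {Q : S → A → S → ℝ}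
    (hQ : ∀ s a, (∀ s', 0 ≤ Q s a s') ∧ ∑ s', Q s a s' = 1) (f : S → A → ℝ) :
    ∑ s, |∑ s', ∑ a', Q s' a' s * f s' a'| ≤ ∑ s', ∑ a', |f s' a'| := by
  calc ∑ s, |∑ s', ∑ a', Q s' a' s * f s' a'|
      ≤ ∑ s, ∑ s', ∑ a', Q s' a' s * |f s' a'| := by
        gcongr with s
        refine (abs_sum_le_sum_abs _ _).trans (sum_le_sum fun s' _ => ?_)
        refine (abs_sum_le_sum_abs _ _).trans_eq (sum_congr rfl fun a' _ => ?_)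
        rw [abs_mul, abs_of_nonneg ((hQ s' a').1 s)]
    _ = ∑ s', ∑ a', |f s' a'| := by
        rw [sum_comm]
        refine sum_congr rfl fun s' _ => ?_
        rw [sum_comm]
        refine sum_congr rfl fun a' _ => ?_
        rw [← sum_mul, (hQ s' a').2, one_mul]

lemma sum_abs_mul_sub_mul_le {p p' : A → ℝ} (hp : ∀ a, 0 ≤ p a) (hp_sum : ∑ a, p a = 1)
    {x x' : ℝ} (hx' : 0 ≤ x') :
    ∑ a, |p a * x - p' a * x'| ≤ |x - x'| + x' * ∑ a, |p a - p' a| := by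
  calc ∑ a, |p a * x - p' a * x'| = ∑ a, |p a * (x - x') + (p a - p' a) * x'| := by
        congr! 2 with a; ring
    _ ≤ ∑ a, (p a * |x - x'| + x' * |p a - p' a|) := by
        gcongr with a
        refine (abs_add_le _ _).trans_eq ?_
        rw [abs_mul, abs_mul, abs_of_nonneg (hp a), abs_of_nonneg hx', mul_comm x']
    _ = |x - x'| + x' * ∑ a, |p a - p' a| := by
        rw [sum_add_distrib, ← sum_mul, hp_sum, one_mul, mul_sum]

noncomputable def stateDist (μ₁ : S → ℝ) (P : ℕ → S → A → S → ℝ) (π : ℕ → S → A → ℝ) :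
    ℕ → S → ℝ
  | 0 => μ₁
  | h + 1 => fun s => ∑ s', ∑ a', P h s' a' s * occ μ₁ P π h s' a'

variable {μ₁ : S → ℝ} {P : ℕ → S → A → S → ℝ} {π π' : ℕ → S → A → ℝ}

lemma occ_eq_mul_stateDist (h : ℕ) (s : S) (a : A) :
    occ μ₁ P π h s a = π h s a * stateDist μ₁ P π h s := by
  cases h with
  | zero => exact mul_comm _ _
  | succ h => rfl

lemma sum_occ_eq_stateDist (hπ : IsPolicy π) (h : ℕ) (s : S) :
    ∑ a, occ μ₁ P π h s a = stateDist μ₁ P π h s := by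
  simp_rw [occ_eq_mul_stateDist, ← sum_mul, (hπ h s).2, one_mul]

lemma stateDist_nonneg (hμ₁ : ∀ s, 0 ≤ μ₁ s) (hP : IsKernel P) (hπ : IsPolicy π) :
    ∀ h s, 0 ≤ stateDist μ₁ P π h s
  | 0, s => hμ₁ s
  | h + 1, s => sum_nonneg fun s' _ => sum_nonneg fun a' _ => by
      rw [occ_eq_mul_stateDist]
      exact mul_nonneg ((hP h s' a').1 s)
        (mul_nonneg ((hπ h s').1 a') (stateDist_nonneg hμ₁ hP hπ h s'))

lemma sum_abs_stateDist_succ_sub_le (hP : IsKernel P) (h : ℕ) :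
    ∑ s, |stateDist μ₁ P π (h + 1) s - stateDist μ₁ P π' (h + 1) s| ≤
      ∑ s, ∑ a, |occ μ₁ P π h s a - occ μ₁ P π' h s a| := by
  refine le_of_eq_of_le ?_ (sum_abs_sum_kernel_mul_le (hP h) _)
  simp only [stateDist, ← sum_sub_distrib, ← mul_sub]

lemma sum_abs_occ_sub_le (hμ₁ : ∀ s, 0 ≤ μ₁ s) (hP : IsKernel P) (hπ : IsPolicy π)
    (hπ' : IsPolicy π') (h : ℕ) :
    ∑ s, ∑ a, |occ μ₁ P π h s a - occ μ₁ P π' h s a| ≤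
      ∑ s, |stateDist μ₁ P π h s - stateDist μ₁ P π' h s| +
        ∑ s, stateDist μ₁ P π' h s * ∑ a, |π h s a - π' h s a| := by
  rw [← sum_add_distrib]
  gcongr with s
  simp only [occ_eq_mul_stateDist]
  exact sum_abs_mul_sub_mul_le ((hπ h s).1) (hπ h s).2 (stateDist_nonneg hμ₁ hP hπ' h s)

/-- Performance-difference bound for occupancy measures at a single step. -/
lemma sum_abs_occ_sub_le_sum_range (hμ₁ : ∀ s, 0 ≤ μ₁ s) (hP : IsKernel P)
    (hπ : IsPolicy π) (hπ' : IsPolicy π') (h : ℕ) :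
    ∑ s, ∑ a, |occ μ₁ P π h s a - occ μ₁ P π' h s a| ≤
      ∑ k ∈ range (h + 1), ∑ s, stateDist μ₁ P π' k s * ∑ a, |π k s a - π' k s a| := by
  refine (sum_abs_occ_sub_le hμ₁ hP hπ hπ' h).trans ?_
  rw [sum_range_succ]
  gcongr
  cases h with
  | zero => simp [stateDist]
  | succ h =>
    exact (sum_abs_stateDist_succ_sub_le hP h).trans
      (sum_abs_occ_sub_le_sum_range hμ₁ hP hπ hπ' h)

def occDist (H : ℕ) (μ ν : ℕ → S → A → ℝ) : ℝ :=
  ∑ h ∈ range H, ∑ s, ∑ a, |μ h s a - ν h s a|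

def policyDist (H : ℕ) (d : ℕ → S → ℝ) (π π' : ℕ → S → A → ℝ) : ℝ :=
  ∑ h ∈ range H, ∑ s, d h s * ∑ a, |π h s a - π' h s a|

lemma occDist_triangle (H : ℕ) (μ ν ρ : ℕ → S → A → ℝ) :
    occDist H μ ρ ≤ occDist H μ ν + occDist H ν ρ := by
  simp only [occDist, ← sum_add_distrib]
  gcongr
  exact abs_sub_le _ _ _

lemma occDist_occ_le_policyDist (hμ₁ : ∀ s, 0 ≤ μ₁ s) (hP : IsKernel P)
    (hπ : IsPolicy π) (hπ' : IsPolicy π') (H : ℕ) :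
    occDist H (occ μ₁ P π) (occ μ₁ P π') ≤
      H * policyDist H (fun h s => ∑ a, occ μ₁ P π' h s a) π π' := by
  have hd := stateDist_nonneg hμ₁ hP hπ'
  calc occDist H (occ μ₁ P π) (occ μ₁ P π')
      ≤ ∑ h ∈ range H, policyDist (h + 1) (stateDist μ₁ P π') π π' :=
        sum_le_sum fun h _ => sum_abs_occ_sub_le_sum_range hμ₁ hP hπ hπ' h
    _ ≤ ∑ _h ∈ range H, policyDist H (stateDist μ₁ P π') π π' := by
        refine sum_le_sum fun h hh => sum_le_sum_of_subset_of_nonneg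
          (range_subset_range.2 (mem_range.1 hh)) fun k _ _ => ?_
        exact sum_nonneg fun s _ => mul_nonneg (hd k s) (sum_nonneg fun _ _ => abs_nonneg _)
    _ = H * policyDist H (fun h s => ∑ a, occ μ₁ P π' h s a) π π' := by
        simp [sum_occ_eq_stateDist hπ']

lemma policyDist_marginal_le (hπ : IsPolicy π) (hπ' : IsPolicy π') (H : ℕ)
    (μ ν : ℕ → S → A → ℝ) :
    policyDist H (fun h s => ∑ a, μ h s a) π π' ≤
      policyDist H (fun h s => ∑ a, ν h s a) π π' + 2 * occDist H μ ν := by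
  simp only [policyDist, occDist]
  rw [mul_sum, ← sum_add_distrib]
  gcongr with h
  rw [mul_sum, ← sum_add_distrib]
  gcongr with s
  have hmarg : ∑ a, μ h s a ≤ ∑ a, ν h s a + ∑ a, |μ h s a - ν h s a| := by
    rw [← sum_add_distrib]
    gcongr with a
    exact sub_le_iff_le_add'.mp (le_abs_self _)
  calc (∑ a, μ h s a) * ∑ a, |π h s a - π' h s a|
      ≤ (∑ a, ν h s a + ∑ a, |μ h s a - ν h s a|) * ∑ a, |π h s a - π' h s a| := by
        gcongr
    _ ≤ (∑ a, ν h s a) * ∑ a, |π h s a - π' h s a| + (∑ a, |μ h s a - ν h s a|) * 2 := by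
        rw [add_mul]
        gcongr
        exact hπ.sum_abs_sub_le_two hπ' h s
    _ = (∑ a, ν h s a) * ∑ a, |π h s a - π' h s a| + 2 * ∑ a, |μ h s a - ν h s a| := by
        ring

end

theorem stmt15_general {S A : Type*} [Fintype S] [Fintype A]
    (H : ℕ) (μ₁ : S → ℝ) (hμ₁ : IsProb μ₁)
    (P Phat : ℕ → S → A → S → ℝ) (hPhat : IsKernel Phat)
    (πstar πopt πb : ℕ → S → A → ℝ)
    (hπopt : IsPolicy πopt) (hπb : IsPolicy πb)
    (LU : ℝ) (hLU : 0 ≤ LU)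
    (U : (ℕ → S → A → ℝ) → ℝ)
    (hLip : ∀ μ ν, |U μ - U ν| ≤
      LU * ∑ h ∈ Finset.range H, ∑ s, ∑ a, |μ h s a - ν h s a|)
    (hopt : U (occ μ₁ P πstar) ≤ U (occ μ₁ Phat πopt)) :
    U (occ μ₁ P πstar) - U (occ μ₁ P πb) ≤
      LU * H * ∑ h ∈ Finset.range H, ∑ s,
          (∑ a, occ μ₁ P πb h s a) * (∑ a, |πopt h s a - πb h s a|)
        + LU * (2 * H + 1) * ∑ h ∈ Finset.range H, ∑ s, ∑ a,
            |occ μ₁ Phat πb h s a - occ μ₁ P πb h s a| := by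
  set μbar := occ μ₁ P πb
  set μhat := occ μ₁ Phat πb
  calc U (occ μ₁ P πstar) - U μbar ≤ LU * occDist H (occ μ₁ Phat πopt) μbar :=
        (sub_le_sub_right hopt _).trans ((le_abs_self _).trans (hLip _ _))
    _ ≤ LU * (occDist H (occ μ₁ Phat πopt) μhat + occDist H μhat μbar) := by
        gcongr
        exact occDist_triangle H _ _ _
    _ ≤ LU * (H * policyDist H (fun h s => ∑ a, μhat h s a) πopt πb + occDist H μhat μbar) := by
        gcongr
        exact occDist_occ_le_policyDist hμ₁.1 hPhat hπopt hπb H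
    _ ≤ LU * (H * (policyDist H (fun h s => ∑ a, μbar h s a) πopt πb
          + 2 * occDist H μhat μbar) + occDist H μhat μbar) := by
        gcongr
        exact policyDist_marginal_le hπopt hπb H μhat μbar
    _ = _ := by simp only [policyDist, occDist]; ring

/-- Per-round steering-gap decomposition: under optimism
`U(μ^{π*}_{M*}) ≤ U(μ^{π_*}_{M̂})` for the true maximizer π*, and L_U-Lipschitzness of U
in ‖·‖₁, the per-round steering gap decomposes into a population convergence term and a
model estimation term. Here μ̄ = μ^{π̄}_{M*}. -/
theorem stmt15 {S A : Type*} [Fintype S] [Fintype A]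
    (H : ℕ) (μ₁ : S → ℝ) (hμ₁ : IsProb μ₁)
    (P Phat : ℕ → S → A → S → ℝ) (hP : IsKernel P) (hPhat : IsKernel Phat)
    (πstar πopt πb : ℕ → S → A → ℝ)
    (hπstar : IsPolicy πstar) (hπopt : IsPolicy πopt) (hπb : IsPolicy πb)
    (LU : ℝ) (hLU : 0 ≤ LU)
    (U : (ℕ → S → A → ℝ) → ℝ)
    (hLip : ∀ μ ν, |U μ - U ν| ≤
      LU * ∑ h ∈ Finset.range H, ∑ s, ∑ a, |μ h s a - ν h s a|)
    (hmaximizer : ∀ π, IsPolicy π → U (occ μ₁ P π) ≤ U (occ μ₁ P πstar))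
    (hopt : U (occ μ₁ P πstar) ≤ U (occ μ₁ Phat πopt)) :
    U (occ μ₁ P πstar) - U (occ μ₁ P πb) ≤
      LU * H * ∑ h ∈ Finset.range H, ∑ s,
          (∑ a, occ μ₁ P πb h s a) * (∑ a, |πopt h s a - πb h s a|)
        + LU * (2 * H + 1) * ∑ h ∈ Finset.range H, ∑ s, ∑ a,
            |occ μ₁ Phat πb h s a - occ μ₁ P πb h s a| :=
  stmt15_general H μ₁ hμ₁ P Phat hPhat πstar πopt πb hπopt hπb LU hLU U hLip hopt
end

section
/- (Steering cost bound for policy-incentivizing rewards.) Let π^1, ..., π^T be Markov policies (possibly repeating), and μ̄^1, ..., μ̄^T occupancy measures in a fixed model with μ^{π^t} the occupancy of π^t. With R_π(μ) = −μᵀ(W^π−I)ᵀ(W^π−I) and R^t(μ) = R_{π^t}(μ) + ‖R_{π^t}(μ)‖_∞·1, the cumulative steering cost satisfies Σ_{t=1}^T ⟨R^t(μ̄^t), μ̄^t⟩ ≤ 4H·sqrt( T · Σ_{t=1}^T ⟨R_{π^t}(μ̄^t), μ^{π^t} − μ̄^t⟩ ). -/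
/-!
Write `v = (W^π - I) μ` for the gap between `μ` and the occupancy obtained by replacing its
action distributions by `π`. State by state `R_π(μ) = v - ⟨π, v⟩`, which is orthogonal to `π`
and hence to `μ^π` (whose action distributions are `π`), while `⟨R_π(μ), μ⟩ = -‖v‖₂²`. So the
progress term `⟨R_π(μ), μ^π - μ⟩` is `‖v‖₂²`. Each of the `H` layers of `μ̄` has mass one,
hence `⟨R^t(μ̄), μ̄⟩ = -‖v‖₂² + H ‖R_π(μ̄)‖_∞ ≤ 2H ‖v‖₂`, and Cauchy–Schwarz over the rounds
concludes.
-/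

open Finset

noncomputable def Rpi {S A : Type*} [Fintype A] [DecidableEq A]
    (π : ℕ → S → A → ℝ) (μ : ℕ → S → A → ℝ) (h : ℕ) (s : S) (a : A) : ℝ :=
  - ∑ a', (π h s a' * (∑ b, μ h s b) - μ h s a') * (π h s a' - if a' = a then 1 else 0)

/-- The vector `(W^π - I) μ` of the paper. -/
noncomputable def policyGap {S A : Type*} [Fintype A] (π μ : ℕ → S → A → ℝ)
    (h : ℕ) (s : S) (a : A) : ℝ :=
  π h s a * ∑ b, μ h s b - μ h s a

noncomputable def gapNormSq {S A : Type*} [Fintype S] [Fintype A] (π μ : ℕ → S → A → ℝ)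
    (H : ℕ) : ℝ :=
  ∑ h ∈ range H, ∑ s, ∑ a, policyGap π μ h s a ^ 2

section Gap

variable {S A : Type*} [Fintype S] [Fintype A]

lemma gapNormSq_nonneg (π μ : ℕ → S → A → ℝ) (H : ℕ) :
    0 ≤ gapNormSq π μ H := by
  unfold gapNormSq; positivity

lemma abs_policyGap_le_sqrt_gapNormSq (π μ : ℕ → S → A → ℝ) {H h : ℕ} (hh : h < H)
    (s : S) (a : A) : |policyGap π μ h s a| ≤ √(gapNormSq π μ H) := by
  refine Real.abs_le_sqrt ?_
  calc policyGap π μ h s a ^ 2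
      ≤ ∑ b, policyGap π μ h s b ^ 2 := single_le_sum (fun _ _ => sq_nonneg _) (mem_univ a)
    _ ≤ ∑ s', ∑ b, policyGap π μ h s' b ^ 2 :=
        single_le_sum (f := fun s' => ∑ b, policyGap π μ h s' b ^ 2)
          (fun _ _ => by positivity) (mem_univ s)
    _ ≤ gapNormSq π μ H :=
        single_le_sum (f := fun h' => ∑ s', ∑ b, policyGap π μ h' s' b ^ 2)
          (fun _ _ => by positivity) (mem_range.2 hh)

end Gap

lemma Real.sum_sqrt_le_sqrt_card_mul_sum {ι : Type*} (s : Finset ι) {f : ι → ℝ}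
    (hf : ∀ i, 0 ≤ f i) : ∑ i ∈ s, √(f i) ≤ √(#s * ∑ i ∈ s, f i) := by
  have := Real.sum_sqrt_mul_sqrt_le s (f := fun _ => (1 : ℝ)) (fun _ => zero_le_one) hf
  simpa [Real.sqrt_mul (Nat.cast_nonneg _)] using this

section Occupancy

variable {S A : Type*} [Fintype S] [Fintype A]

lemma occ_eq_policy_mul (μ₁ : S → ℝ) (P : ℕ → S → A → S → ℝ) (π : ℕ → S → A → ℝ)
    (h : ℕ) (s : S) : ∃ g : ℝ, ∀ a, occ μ₁ P π h s a = π h s a * g := by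
  cases h with
  | zero => exact ⟨μ₁ s, fun a => mul_comm _ _⟩
  | succ n => exact ⟨_, fun a => rfl⟩

lemma sum_occ {μ₁ : S → ℝ} {P : ℕ → S → A → S → ℝ} {π : ℕ → S → A → ℝ}
    (hμ₁ : IsProb μ₁) (hP : IsKernel P) (hπ : IsPolicy π) (h : ℕ) :
    ∑ s, ∑ a, occ μ₁ P π h s a = 1 := by
  induction h with
  | zero => simp [occ, ← mul_sum, (hπ 0 _).2, hμ₁.2]
  | succ n ih =>
    simp only [occ, ← sum_mul, (hπ _ _).2, one_mul]
    rw [sum_comm, ← ih]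
    refine sum_congr rfl fun s' _ => ?_
    rw [sum_comm]
    simp [← sum_mul, (hP n s' _).2]

end Occupancy

section Reward

variable {S A : Type*} [Fintype A] [DecidableEq A]

lemma Rpi_eq_policyGap (π μ : ℕ → S → A → ℝ) (h : ℕ) (s : S) (a : A) :
    Rpi π μ h s a = policyGap π μ h s a - ∑ a', π h s a' * policyGap π μ h s a' := by
  have hδ : ∀ a', policyGap π μ h s a' * (π h s a' - if a' = a then 1 else 0)
      = π h s a' * policyGap π μ h s a' - if a' = a then policyGap π μ h s a' else 0 := by
    intro a'; split_ifs <;> ring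
  change -∑ a', policyGap π μ h s a' * (π h s a' - if a' = a then 1 else 0) = _
  simp only [hδ, sum_sub_distrib, sum_ite_eq', mem_univ, if_true]
  ring

lemma sum_Rpi_mul_self (π μ : ℕ → S → A → ℝ) (h : ℕ) (s : S) :
    ∑ a, Rpi π μ h s a * μ h s a = -∑ a, policyGap π μ h s a ^ 2 := by
  have hsq : ∀ a, policyGap π μ h s a ^ 2
      = π h s a * policyGap π μ h s a * ∑ b, μ h s b - policyGap π μ h s a * μ h s a := by
    intro a; rw [sq]; nth_rw 1 [policyGap]; ring
  simp only [Rpi_eq_policyGap, hsq, sub_mul, sum_sub_distrib, ← sum_mul, ← mul_sum]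
  ring

lemma sum_Rpi_mul_policy_mul (π μ : ℕ → S → A → ℝ) (h : ℕ) (s : S)
    (hπ : ∑ a, π h s a = 1) (g : ℝ) :
    ∑ a, Rpi π μ h s a * (π h s a * g) = 0 := by
  have hterm : ∀ a, Rpi π μ h s a * (π h s a * g) = g * (π h s a * policyGap π μ h s a)
      - g * (∑ a', π h s a' * policyGap π μ h s a') * π h s a := by
    intro a; rw [Rpi_eq_policyGap]; ring
  simp only [hterm, sum_sub_distrib, ← mul_sum, hπ]
  ring

lemma abs_Rpi_le {π μ : ℕ → S → A → ℝ} {h : ℕ} {s : S} {c : ℝ} (hπ : IsPolicy π)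
    (hc : ∀ a, |policyGap π μ h s a| ≤ c) (a : A) : |Rpi π μ h s a| ≤ 2 * c := by
  have hmean : |∑ a', π h s a' * policyGap π μ h s a'| ≤ c :=
    calc |∑ a', π h s a' * policyGap π μ h s a'|
        ≤ ∑ a', π h s a' * |policyGap π μ h s a'| := by
          simpa only [abs_mul, abs_of_nonneg ((hπ h s).1 _)] using abs_sum_le_sum_abs (fun a' => π h s a' * policyGap π μ h s a') univ
      _ ≤ ∑ a', π h s a' * c := by gcongr with a' _; exacts [(hπ h s).1 a', hc a']
      _ = c := by rw [← sum_mul, (hπ h s).2, one_mul]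
  rw [Rpi_eq_policyGap]
  linarith [abs_sub (policyGap π μ h s a) (∑ a', π h s a' * policyGap π μ h s a'), hc a]

variable [Fintype S] {π : ℕ → S → A → ℝ}

lemma sum_Rpi_mul_occ (hπ : IsPolicy π) (μ₁ : S → ℝ) (P : ℕ → S → A → S → ℝ)
    (μ : ℕ → S → A → ℝ) (h : ℕ) (s : S) : ∑ a, Rpi π μ h s a * occ μ₁ P π h s a = 0 := by
  obtain ⟨g, hg⟩ := occ_eq_policy_mul μ₁ P π h s
  simp only [hg]
  exact sum_Rpi_mul_policy_mul π μ h s (hπ h s).2 g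

lemma sum_Rpi_mul_occ_sub (hπ : IsPolicy π) (μ₁ : S → ℝ) (P : ℕ → S → A → S → ℝ)
    (μ : ℕ → S → A → ℝ) (H : ℕ) :
    ∑ h ∈ range H, ∑ s, ∑ a, Rpi π μ h s a * (occ μ₁ P π h s a - μ h s a) =
      gapNormSq π μ H := by
  simp [mul_sub, sum_Rpi_mul_occ hπ, sum_Rpi_mul_self, gapNormSq]

lemma iSup_abs_Rpi_le (hπ : IsPolicy π) (μ : ℕ → S → A → ℝ) (H : ℕ) :
    ⨆ p : Fin H × S × A, |Rpi π μ p.1 p.2.1 p.2.2| ≤ 2 * √(gapNormSq π μ H) :=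
  Real.iSup_le (fun p => abs_Rpi_le hπ (abs_policyGap_le_sqrt_gapNormSq π μ p.1.2 p.2.1) p.2.2)
    (by positivity)

lemma sum_Rpi_add_const_mul_le {μ : ℕ → S → A → ℝ} {H : ℕ} (hμ : ∀ h, ∑ s, ∑ a, μ h s a = 1)
    {c : ℝ} (hc : c ≤ 2 * √(gapNormSq π μ H)) :
    ∑ h ∈ range H, ∑ s, ∑ a, (Rpi π μ h s a + c) * μ h s a ≤ 2 * H * √(gapNormSq π μ H) := by
  have hE := gapNormSq_nonneg π μ H
  calc ∑ h ∈ range H, ∑ s, ∑ a, (Rpi π μ h s a + c) * μ h s a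
      = -gapNormSq π μ H + H * c := by
        simp [add_mul, sum_add_distrib, sum_Rpi_mul_self, ← mul_sum, hμ, gapNormSq]
    _ ≤ -gapNormSq π μ H + H * (2 * √(gapNormSq π μ H)) := by gcongr
    _ ≤ 2 * H * √(gapNormSq π μ H) := by linarith

end Reward

theorem stmt17_general {S A : Type*} [Fintype S] [Fintype A]
    [DecidableEq A]
    (H T : ℕ) (μ₁ : S → ℝ) (hμ₁ : IsProb μ₁)
    (P : ℕ → S → A → S → ℝ) (hP : IsKernel P)
    (πt : ℕ → ℕ → S → A → ℝ) (hπt : ∀ t, IsPolicy (πt t))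
    (ρ : ℕ → ℕ → S → A → ℝ) (hρ : ∀ t, IsPolicy (ρ t))
    (μb : ℕ → ℕ → S → A → ℝ) (hμb : ∀ t, μb t = occ μ₁ P (ρ t)) :
    let Rinf : ℕ → ℝ := fun t => ⨆ p : Fin H × S × A, |Rpi (πt t) (μb t) p.1 p.2.1 p.2.2|
    ∑ t ∈ Finset.range T, ∑ h ∈ Finset.range H, ∑ s, ∑ a,
        (Rpi (πt t) (μb t) h s a + Rinf t) * μb t h s a ≤
      4 * H * Real.sqrt ((T : ℝ) *
        ∑ t ∈ Finset.range T, ∑ h ∈ Finset.range H, ∑ s, ∑ a,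
          Rpi (πt t) (μb t) h s a * (occ μ₁ P (πt t) h s a - μb t h s a)) := by
  intro Rinf
  set E : ℕ → ℝ := fun t => gapNormSq (πt t) (μb t) H
  have hround : ∀ t, ∑ h ∈ range H, ∑ s, ∑ a, (Rpi (πt t) (μb t) h s a + Rinf t) * μb t h s a
      ≤ 2 * H * √(E t) := fun t =>
    sum_Rpi_add_const_mul_le (fun h => hμb t ▸ sum_occ hμ₁ hP (hρ t) h) (iSup_abs_Rpi_le (hπt t) _ _)
  have hprogress : ∀ t ∈ range T, ∑ h ∈ range H, ∑ s, ∑ a,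
      Rpi (πt t) (μb t) h s a * (occ μ₁ P (πt t) h s a - μb t h s a) = E t :=
    fun t _ => sum_Rpi_mul_occ_sub (hπt t) μ₁ P (μb t) H
  rw [sum_congr rfl hprogress]
  calc _ ≤ ∑ t ∈ range T, 2 * H * √(E t) := sum_le_sum fun t _ => hround t
    _ = 2 * H * ∑ t ∈ range T, √(E t) := by rw [mul_sum]
    _ ≤ 2 * H * √(T * ∑ t ∈ range T, E t) := by
        gcongr
        simpa using Real.sum_sqrt_le_sqrt_card_mul_sum (range T) fun t => gapNormSq_nonneg _ _ H
    _ ≤ 4 * H * √(T * ∑ t ∈ range T, E t) := by gcongr; norm_num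

/-- Steering cost bound for policy-incentivizing rewards: with
`R^t(μ) = R_{π^t}(μ) + ‖R_{π^t}(μ)‖_∞·1`, the cumulative steering cost is at most
`4H·sqrt(T · Σ_t ⟨R_{π^t}(μ̄^t), μ^{π^t} − μ̄^t⟩)`. -/
theorem stmt17 {S A : Type*} [Fintype S] [Fintype A] [Nonempty S] [Nonempty A]
    [DecidableEq A]
    (H T : ℕ) (hH : 0 < H) (μ₁ : S → ℝ) (hμ₁ : IsProb μ₁)
    (P : ℕ → S → A → S → ℝ) (hP : IsKernel P)
    (πt : ℕ → ℕ → S → A → ℝ) (hπt : ∀ t, IsPolicy (πt t))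
    (ρ : ℕ → ℕ → S → A → ℝ) (hρ : ∀ t, IsPolicy (ρ t))
    (μb : ℕ → ℕ → S → A → ℝ) (hμb : ∀ t, μb t = occ μ₁ P (ρ t)) :
    let Rinf : ℕ → ℝ := fun t => ⨆ p : Fin H × S × A, |Rpi (πt t) (μb t) p.1 p.2.1 p.2.2|
    ∑ t ∈ Finset.range T, ∑ h ∈ Finset.range H, ∑ s, ∑ a,
        (Rpi (πt t) (μb t) h s a + Rinf t) * μb t h s a ≤
      4 * H * Real.sqrt ((T : ℝ) *
        ∑ t ∈ Finset.range T, ∑ h ∈ Finset.range H, ∑ s, ∑ a,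
          Rpi (πt t) (μb t) h s a * (occ μ₁ P (πt t) h s a - μb t h s a)) :=
  stmt17_general H T μ₁ hμ₁ P hP πt hπt ρ hρ μb hμb
end
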